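/- Let G be a chordal graph, let K be a clique in G, and let s and t be two vertices not in K, each having exactly two non-neighbours in K. If s and t are adjacent, then s and t have the same pair of non-neighbours in K. -/

import Mathlib

open SimpleGraph

/-- `H` occurs as an induced subgraph of `G` iff there is a graph embedding `H ↪g G`.
`Free H G` means `G` has no induced subgraph isomorphic to `H`. -/
def Free {α β : Type*} (H : SimpleGraph α) (G : SimpleGraph β) : Prop :=
  IsEmpty (H ↪g G)

/-- A graph is chordal if it has no induced cycle of length at least `4`. -/
def Chordal {V : Type*} (G : SimpleGraph V) : Prop :=
  ∀ n : ℕ, 4 ≤ n → _root_.Free (cycleGraph n) G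

/-- A set is independent if no two of its vertices are adjacent. -/
def IsIndepSet {V : Type*} (G : SimpleGraph V) (s : Set V) : Prop :=
  s.Pairwise fun u v => ¬ G.Adj u v

/-- `2P2`: the disjoint union of two edges. -/
def twoP2 : SimpleGraph (Fin 4) :=
  SimpleGraph.fromRel fun a b => (a = 0 ∧ b = 1) ∨ (a = 2 ∧ b = 3)

/-- The paw: a triangle `0,1,2` with a pendant vertex `3` adjacent to `2`. -/
def paw : SimpleGraph (Fin 4) :=
  SimpleGraph.fromRel fun a b =>
    (a = 0 ∧ b = 1) ∨ (a = 0 ∧ b = 2) ∨ (a = 1 ∧ b = 2) ∨ (a = 2 ∧ b = 3)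

/-- `P1 + paw`: an isolated vertex `0` together with a paw on `1,2,3,4`. -/
def p1Paw : SimpleGraph (Fin 5) :=
  SimpleGraph.fromRel fun a b =>
    (a = 1 ∧ b = 2) ∨ (a = 1 ∧ b = 3) ∨ (a = 2 ∧ b = 3) ∨ (a = 3 ∧ b = 4)

/-- `2P1 + P3`: two isolated vertices `0,1` and a path `2-3-4`. -/
def twoP1P3 : SimpleGraph (Fin 5) :=
  SimpleGraph.fromRel fun a b => (a = 2 ∧ b = 3) ∨ (a = 3 ∧ b = 4)

/-- The chair `S_{1,1,2}`: centre `0` with leaves `1,2` and pendant path `0-3-4`. -/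
def chair : SimpleGraph (Fin 5) :=
  SimpleGraph.fromRel fun a b =>
    (a = 0 ∧ b = 1) ∨ (a = 0 ∧ b = 2) ∨ (a = 0 ∧ b = 3) ∨ (a = 3 ∧ b = 4)

/-- `P1 + diamond`: an isolated vertex `0` and a diamond (`K4` minus the edge `3-4`)
on `1,2,3,4`. -/
def p1Diamond : SimpleGraph (Fin 5) :=
  SimpleGraph.fromRel fun a b =>
    (a = 1 ∧ b = 2) ∨ (a = 1 ∧ b = 3) ∨ (a = 1 ∧ b = 4) ∨ (a = 2 ∧ b = 3) ∨ (a = 2 ∧ b = 4)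

/-- `P2 + P4`: an edge `0-1` and a path `2-3-4-5`. -/
def p2P4 : SimpleGraph (Fin 6) :=
  SimpleGraph.fromRel fun a b =>
    (a = 0 ∧ b = 1) ∨ (a = 2 ∧ b = 3) ∨ (a = 3 ∧ b = 4) ∨ (a = 4 ∧ b = 5)

/-- `S_{1,2,3}`: centre `0` with pendant paths `0-1`, `0-2-3` and `0-4-5-6`. -/
def s123 : SimpleGraph (Fin 7) :=
  SimpleGraph.fromRel fun a b =>
    (a = 0 ∧ b = 1) ∨ (a = 0 ∧ b = 2) ∨ (a = 2 ∧ b = 3) ∨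
    (a = 0 ∧ b = 4) ∨ (a = 4 ∧ b = 5) ∨ (a = 5 ∧ b = 6)

/-- A complete split graph: a clique `K` complete to an independent set `I`,
together covering all vertices. -/
def IsCompleteSplit {V : Type*} (G : SimpleGraph V) : Prop :=
  ∃ K I : Set V, (∀ v, v ∈ K ∨ v ∈ I) ∧ (∀ v, ¬ (v ∈ K ∧ v ∈ I)) ∧
    G.IsClique K ∧ _root_.IsIndepSet G I ∧ ∀ k ∈ K, ∀ i ∈ I, G.Adj k i

theorem Chordal.adj_or_adj_of_cycle4 {V : Type*} {G : SimpleGraph V} (hG : Chordal G)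
    {a b c d : V} (hab : G.Adj a b) (hbc : G.Adj b c) (hcd : G.Adj c d) (hda : G.Adj d a)
    (hac : a ≠ c) (hbd : b ≠ d) : G.Adj a c ∨ G.Adj b d := by
  by_contra! ⟨hac', hbd'⟩
  have hca : ¬G.Adj c a := fun h => hac' h.symm
  have hdb : ¬G.Adj d b := fun h => hbd' h.symm
  let f : Fin 4 → V := ![a, b, c, d]
  have hinj : f.Injective := by
    intro i j
    fin_cases i <;> fin_cases j <;>
      simp [f, hab.ne, hbc.ne, hcd.ne, hda.ne, hab.ne.symm, hbc.ne.symm, hcd.ne.symm,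
        hda.ne.symm, hac, hbd, hac.symm, hbd.symm]
  have hadj : ∀ i j, G.Adj (f i) (f j) ↔ (cycleGraph 4).Adj i j := by
    intro i j
    fin_cases i <;> fin_cases j <;>
      simp [f, hab, hbc, hcd, hda, hab.symm, hbc.symm, hcd.symm, hda.symm, hac', hbd', hca, hdb] <;>
      decide
  exact (hG 4 le_rfl).false ⟨⟨f, hinj⟩, hadj _ _⟩

theorem Set.exists_mem_notMem_of_ncard_eq_of_ne {α : Type*} {A B : Set α} (hB : B.Finite)
    (hcard : A.ncard = B.ncard) (hne : A ≠ B) : ∃ a ∈ A, a ∉ B :=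
  Set.not_subset.mp fun h => hne (Set.eq_of_subset_of_ncard_le h hcard.ge hB)

/-- In a chordal graph, two adjacent vertices outside a clique `K`, each with
exactly two non-neighbours in `K`, have the same pair of non-neighbours in `K`. -/
theorem chordal_adjacent_same_nonNeighbours {V : Type*}
    (G : SimpleGraph V) (hch : Chordal G) (K : Set V) (hK : G.IsClique K)
    (s t : V) (hs : s ∉ K) (ht : t ∉ K)
    (hs2 : {x ∈ K | ¬ G.Adj s x}.ncard = 2)
    (ht2 : {x ∈ K | ¬ G.Adj t x}.ncard = 2)
    (hst : G.Adj s t) :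
    {x ∈ K | ¬ G.Adj s x} = {x ∈ K | ¬ G.Adj t x} := by
  by_contra hne
  obtain ⟨a, ⟨haK, hsa⟩, hta⟩ := Set.exists_mem_notMem_of_ncard_eq_of_ne
    (Set.finite_of_ncard_pos (ht2 ▸ two_pos)) (hs2.trans ht2.symm) hne
  obtain ⟨b, ⟨hbK, htb⟩, hsb⟩ := Set.exists_mem_notMem_of_ncard_eq_of_ne
    (Set.finite_of_ncard_pos (hs2 ▸ two_pos)) (ht2.trans hs2.symm) (Ne.symm hne)
  replace hta : G.Adj t a := by simpa [haK] using hta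
  replace hsb : G.Adj s b := by simpa [hbK] using hsb
  have hab : G.Adj a b := hK haK hbK (by rintro rfl; exact htb hta)
  -- `s - t - a - b - s` would be an induced 4-cycle.
  rcases hch.adj_or_adj_of_cycle4 hst hta hab hsb.symm (by rintro rfl; exact hs haK)
    (by rintro rfl; exact ht hbK) with hsa' | htb'
  · exact hsa hsa'
  · exact htb htb'
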